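/- arXiv:2012.14343 — 4 statements merged into one kernel-verified Lean document; each statement's English description precedes it below -/
import Mathlib

section
/- Let v be a subharmonic function on the unit disc 𝔻, let x ∈ ℂ with |x| ≤ 1/8, and let A_x = {ζ ∈ ℂ : 1/4 ≤ |ζ - x| ≤ 1/2}. Then (3/32) v(x) ≤ (1/(2π)) ∫_{A_x} |v| dλ. -/
open MeasureTheory Metric Complex Filter Topology

/-- A real-valued function is subharmonic on a set if it is upper semicontinuous there
and satisfies the sub-mean value inequality on every closed disc contained in the set. -/
def SubharmonicOn (v : ℂ → ℝ) (U : Set ℂ) : Prop :=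
  UpperSemicontinuousOn v U ∧
  ∀ z r, 0 < r → Metric.closedBall z r ⊆ U →
    v z ≤ (2 * Real.pi)⁻¹ * ∫ θ in (0:ℝ)..(2 * Real.pi), v (z + r * Complex.exp (θ * Complex.I))

/-! We may assume `v x > 0`. For `1/4 ≤ r ≤ 1/2` the sub-mean value inequality on the circle of
radius `r` about `x` gives `2π v(x) ≤ ∫ |v|` over that circle; integrating against `r dr` over
`[1/4, 1/2]` in polar coordinates centred at `x` gives `2π v(x) · 3/32 ≤ ∫_{A_x} |v| dλ`. The
right-hand side is a genuine integral because `v ≤ M` on the closed disc of radius `1/2`, so that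
`∫ |v| ≤ ∫ (2M - v) ≤ 4πM` on each of these circles. -/

open Real Set
open scoped ENNReal

theorem UpperSemicontinuousOn.measurable_indicator {α β : Type*} [TopologicalSpace α]
    [MeasurableSpace α] [OpensMeasurableSpace α] [LinearOrder β] [TopologicalSpace β]
    [OrderTopology β] [SecondCountableTopology β] [MeasurableSpace β] [BorelSpace β] [Zero β]
    {f : α → β} {s : Set α} (hs : MeasurableSet s) (hf : UpperSemicontinuousOn f s) :
    Measurable (s.indicator f) := by
  refine measurable_of_restrict_of_restrict_compl hs ?_ ?_
  · have : s.domRestrict (s.indicator f) = s.domRestrict f := funext fun y ↦ indicator_of_mem y.2 f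
    exact this ▸ (upperSemicontinuousOn_iff_restrict.2 hf).measurable
  · have : sᶜ.domRestrict (s.indicator f) = 0 := funext fun y ↦ indicator_of_notMem y.2 f
    exact this ▸ measurable_zero

theorem lintegral_eq_lintegral_circleMap {f : ℂ → ℝ≥0∞} (hf : Measurable f) (x : ℂ) :
    ∫⁻ ζ, f ζ = ∫⁻ r in Ioi 0, ENNReal.ofReal r * ∫⁻ θ in Ioo (-π) π, f (circleMap x r θ) := by
  have hpolar (p : ℝ × ℝ) : x + Complex.polarCoord.symm p = circleMap x p.1 p.2 := by
    simp [circleMap, Complex.exp_mul_I]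
  rw [← lintegral_add_left_eq_self _ x, ← Complex.lintegral_comp_polarCoord_symm,
    polarCoord_target, Measure.volume_eq_prod, ← Measure.prod_restrict, lintegral_prod]
  · simp_rw [smul_eq_mul, hpolar]
    refine lintegral_congr fun r ↦ lintegral_const_mul _ ?_
    fun_prop
  · simp_rw [smul_eq_mul, hpolar]
    fun_prop

def annulus (x : ℂ) (a b : ℝ) : Set ℂ := {ζ | a ≤ ‖ζ - x‖ ∧ ‖ζ - x‖ ≤ b}

theorem measurableSet_annulus (x : ℂ) (a b : ℝ) : MeasurableSet (annulus x a b) :=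
  have : Measurable fun ζ : ℂ ↦ ‖ζ - x‖ := by fun_prop
  (measurableSet_le measurable_const this).inter (measurableSet_le this measurable_const)

theorem annulus_subset_closedBall (x : ℂ) (a b : ℝ) : annulus x a b ⊆ closedBall x b :=
  fun _ hζ ↦ mem_closedBall_iff_norm.2 hζ.2

section Annulus

variable {f : ℂ → ℝ≥0∞} {x : ℂ} {a b : ℝ}

theorem circleMap_mem_annulus_iff {r : ℝ} (hr : 0 ≤ r) (θ : ℝ) :
    circleMap x r θ ∈ annulus x a b ↔ r ∈ Icc a b := by
  simp [annulus, abs_of_nonneg hr]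

theorem setLIntegral_annulus_eq (ha : 0 < a)
    (hf : Measurable ((annulus x a b).indicator f)) :
    ∫⁻ ζ in annulus x a b, f ζ =
      ∫⁻ r in Icc a b, ENNReal.ofReal r * ∫⁻ θ in Ioo (-π) π, f (circleMap x r θ) := by
  have hslice : ∀ r ∈ Ioi (0 : ℝ),
      ENNReal.ofReal r * ∫⁻ θ in Ioo (-π) π, (annulus x a b).indicator f (circleMap x r θ) =
        (Icc a b).indicator
          (fun r ↦ ENNReal.ofReal r * ∫⁻ θ in Ioo (-π) π, f (circleMap x r θ)) r := by
    intro r hr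
    by_cases hab : r ∈ Icc a b <;> simp [indicator, circleMap_mem_annulus_iff (le_of_lt hr), hab]
  have hpos : Icc a b ⊆ Ioi 0 := fun r hr ↦ ha.trans_le hr.1
  rw [← lintegral_indicator (measurableSet_annulus x a b), lintegral_eq_lintegral_circleMap hf x,
    setLIntegral_congr_fun measurableSet_Ioi hslice, lintegral_indicator measurableSet_Icc,
    Measure.restrict_restrict measurableSet_Icc,
    inter_eq_left.2 hpos]

theorem lintegral_ofReal_Icc (ha : 0 ≤ a) (hab : a ≤ b) :
    ∫⁻ r in Icc a b, ENNReal.ofReal r = ENNReal.ofReal ((b ^ 2 - a ^ 2) / 2) := by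
  rw [← ofReal_integral_eq_lintegral_ofReal (f := fun r ↦ r) continuous_id.integrableOn_Icc
    ((ae_restrict_mem measurableSet_Icc).mono fun r hr ↦ ha.trans hr.1),
    integral_Icc_eq_integral_Ioc, ← intervalIntegral.integral_of_le hab, integral_id]

theorem le_setLIntegral_annulus {m : ℝ≥0∞} (ha : 0 < a) (hab : a ≤ b)
    (hf : Measurable ((annulus x a b).indicator f))
    (hm : ∀ r ∈ Icc a b, m ≤ ∫⁻ θ in Ioo (-π) π, f (circleMap x r θ)) :
    m * ENNReal.ofReal ((b ^ 2 - a ^ 2) / 2) ≤ ∫⁻ ζ in annulus x a b, f ζ := by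
  rw [setLIntegral_annulus_eq ha hf, ← lintegral_ofReal_Icc ha.le hab,
    ← lintegral_const_mul _ ENNReal.measurable_ofReal]
  refine setLIntegral_mono' measurableSet_Icc fun r hr ↦ ?_
  rw [mul_comm]
  gcongr
  exact hm r hr

theorem setLIntegral_annulus_le {C : ℝ≥0∞} (ha : 0 < a) (hab : a ≤ b)
    (hf : Measurable ((annulus x a b).indicator f))
    (hC : ∀ r ∈ Icc a b, ∫⁻ θ in Ioo (-π) π, f (circleMap x r θ) ≤ C) :
    ∫⁻ ζ in annulus x a b, f ζ ≤ C * ENNReal.ofReal ((b ^ 2 - a ^ 2) / 2) := by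
  rw [setLIntegral_annulus_eq ha hf, ← lintegral_ofReal_Icc ha.le hab,
    ← lintegral_const_mul _ ENNReal.measurable_ofReal]
  refine setLIntegral_mono' measurableSet_Icc fun r hr ↦ ?_
  rw [mul_comm]
  gcongr
  exact hC r hr

end Annulus

theorem CircleIntegrable.integrableOn_Ioo {E : Type*} [NormedAddCommGroup E] {f : ℂ → E} {c : ℂ}
    {R : ℝ} (hf : CircleIntegrable f c R) :
    IntegrableOn (fun θ ↦ f (circleMap c R θ)) (Ioo (-π) π) := by
  have := (periodic_circleMap c R).comp f |>.intervalIntegrable₀ two_pi_pos.ne' hf (-π) π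
  exact (intervalIntegrable_iff_integrableOn_Ioo_of_le (by linarith [pi_pos])).1 this

theorem setIntegral_Ioo_circleMap {E : Type*} [NormedAddCommGroup E] [NormedSpace ℝ E]
    (f : ℂ → E) (c : ℂ) (R : ℝ) :
    ∫ θ in Ioo (-π) π, f (circleMap c R θ) = ∫ θ in 0..2 * π, f (circleMap c R θ) := by
  have := ((periodic_circleMap c R).comp f).intervalIntegral_add_eq (-π) 0
  rw [show -π + 2 * π = π by ring, zero_add] at this
  rwa [intervalIntegral.integral_of_le (by linarith [pi_pos]), integral_Ioc_eq_integral_Ioo] at this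

namespace SubharmonicOn

variable {v : ℂ → ℝ} {U : Set ℂ} {x : ℂ} {a b r : ℝ}

theorem two_pi_mul_le_integral (hv : SubharmonicOn v U) (hr : 0 < r) (hU : closedBall x r ⊆ U) :
    2 * π * v x ≤ ∫ θ in 0..2 * π, v (circleMap x r θ) := by
  have := hv.2 x r hr hU
  rwa [inv_mul_eq_div, le_div_iff₀ two_pi_pos, mul_comm] at this

theorem circleIntegrable (hv : SubharmonicOn v U) (hr : 0 < r) (hU : closedBall x r ⊆ U)
    (hx : 0 < v x) : CircleIntegrable v x r := by
  by_contra h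
  -- otherwise the circle integral is the junk value `0`
  have := hv.two_pi_mul_le_integral hr hU
  rw [intervalIntegral.integral_undef h] at this
  nlinarith [two_pi_pos]

theorem ofReal_two_pi_mul_le_lintegral_circleMap (hv : SubharmonicOn v U) (hr : 0 < r)
    (hU : closedBall x r ⊆ U) (hx : 0 < v x) :
    ENNReal.ofReal (2 * π * v x) ≤ ∫⁻ θ in Ioo (-π) π, ‖v (circleMap x r θ)‖ₑ := by
  have hint := (hv.circleIntegrable hr hU hx).integrableOn_Ioo
  rw [← ofReal_integral_norm_eq_lintegral_enorm hint]
  gcongr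
  calc 2 * π * v x ≤ ∫ θ in 0..2 * π, v (circleMap x r θ) := hv.two_pi_mul_le_integral hr hU
    _ = ∫ θ in Ioo (-π) π, v (circleMap x r θ) := (setIntegral_Ioo_circleMap v x r).symm
    _ ≤ ∫ θ in Ioo (-π) π, ‖v (circleMap x r θ)‖ :=
      integral_mono hint hint.norm fun θ ↦ le_abs_self _

theorem lintegral_circleMap_le (hv : SubharmonicOn v U) (hr : 0 < r) (hU : closedBall x r ⊆ U)
    (hx : 0 < v x) {M : ℝ} (hM0 : 0 ≤ M) (hM : ∀ θ, v (circleMap x r θ) ≤ M) :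
    ∫⁻ θ in Ioo (-π) π, ‖v (circleMap x r θ)‖ₑ ≤ ENNReal.ofReal (2 * π * (2 * M - v x)) := by
  have hint := (hv.circleIntegrable hr hU hx).integrableOn_Ioo
  rw [← ofReal_integral_norm_eq_lintegral_enorm hint]
  gcongr
  calc ∫ θ in Ioo (-π) π, ‖v (circleMap x r θ)‖
        ≤ ∫ θ in Ioo (-π) π, (2 * M - v (circleMap x r θ)) := by
        -- `|t| ≤ 2M - t` for `t ≤ M`, as `0 ≤ M`
        refine integral_mono hint.norm ((integrable_const _).sub hint) fun θ ↦ ?_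
        have := hM θ
        rw [Real.norm_eq_abs, abs_le]; constructor <;> linarith
    _ = 2 * π * (2 * M) - ∫ θ in Ioo (-π) π, v (circleMap x r θ) := by
        rw [integral_sub (integrable_const _) hint, setIntegral_const,
          Real.volume_real_Ioo_of_le (by linarith [pi_pos]), smul_eq_mul]
        ring
    _ ≤ 2 * π * (2 * M - v x) := by
        rw [setIntegral_Ioo_circleMap]
        linarith [hv.two_pi_mul_le_integral hr hU]

theorem measurable_indicator_annulus (hv : SubharmonicOn v U) (hU : closedBall x b ⊆ U) :
    Measurable ((annulus x a b).indicator v) :=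
  (hv.1.mono ((annulus_subset_closedBall x a b).trans hU)).measurable_indicator
    (measurableSet_annulus x a b)

theorem measurable_indicator_enorm_annulus (hv : SubharmonicOn v U) (hU : closedBall x b ⊆ U) :
    Measurable ((annulus x a b).indicator fun ζ ↦ ‖v ζ‖ₑ) := by
  simpa only [enorm_indicator_eq_indicator_enorm] using (hv.measurable_indicator_annulus hU).enorm

theorem setLIntegral_enorm_annulus_lt_top (hv : SubharmonicOn v U) (ha : 0 < a) (hab : a ≤ b)
    (hU : closedBall x b ⊆ U) (hx : 0 < v x) : ∫⁻ ζ in annulus x a b, ‖v ζ‖ₑ < ∞ := by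
  obtain ⟨M, hM⟩ := (hv.1.mono hU).bddAbove_of_isCompact (isCompact_closedBall x b)
  have hMx : v x ≤ M := hM (mem_image_of_mem v (mem_closedBall_self (ha.le.trans hab)))
  refine (setLIntegral_annulus_le (C := ENNReal.ofReal (2 * π * (2 * M - v x))) ha hab
    (hv.measurable_indicator_enorm_annulus hU) fun r hr ↦ ?_).trans_lt
    (ENNReal.mul_lt_top ENNReal.ofReal_lt_top ENNReal.ofReal_lt_top)
  have hr0 : 0 < r := ha.trans_le hr.1
  have hrb : closedBall x r ⊆ closedBall x b := closedBall_subset_closedBall hr.2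
  exact hv.lintegral_circleMap_le hr0 (hrb.trans hU) hx (hx.le.trans hMx) fun θ ↦
    hM (mem_image_of_mem v (hrb (circleMap_mem_closedBall x hr0.le θ)))

theorem integrableOn_annulus (hv : SubharmonicOn v U) (ha : 0 < a) (hab : a ≤ b)
    (hU : closedBall x b ⊆ U) (hx : 0 < v x) : IntegrableOn v (annulus x a b) :=
  ⟨(aestronglyMeasurable_indicator_iff (measurableSet_annulus x a b)).1
    (hv.measurable_indicator_annulus hU).aestronglyMeasurable,
    hv.setLIntegral_enorm_annulus_lt_top ha hab hU hx⟩

theorem mul_le_setIntegral_norm_annulus (hv : SubharmonicOn v U) (ha : 0 < a) (hab : a ≤ b)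
    (hU : closedBall x b ⊆ U) :
    2 * π * v x * ((b ^ 2 - a ^ 2) / 2) ≤ ∫ ζ in annulus x a b, ‖v ζ‖ := by
  rcases le_or_gt (v x) 0 with hx | hx
  · refine le_trans ?_ (integral_nonneg fun _ ↦ norm_nonneg _)
    exact mul_nonpos_of_nonpos_of_nonneg (mul_nonpos_of_nonneg_of_nonpos two_pi_pos.le hx)
      (by nlinarith)
  have hlow := le_setLIntegral_annulus ha hab
    (hv.measurable_indicator_enorm_annulus hU) fun r hr ↦
    hv.ofReal_two_pi_mul_le_lintegral_circleMap (ha.trans_le hr.1)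
      ((closedBall_subset_closedBall hr.2).trans hU) hx
  rwa [← ofReal_integral_norm_eq_lintegral_enorm (hv.integrableOn_annulus ha hab hU hx),
    ← ENNReal.ofReal_mul (by positivity), ENNReal.ofReal_le_ofReal_iff (by positivity)] at hlow

end SubharmonicOn

/-- If v is subharmonic on the unit disc and |x| ≤ 1/8,
then (3/32) v(x) ≤ (1/(2π)) ∫_{A_x} |v| dλ where A_x = {1/4 ≤ |ζ-x| ≤ 1/2}. -/
theorem subharmonic_annulus_bound' (v : ℂ → ℝ) (hv : SubharmonicOn v (ball 0 1))
    (x : ℂ) (hx : ‖x‖ ≤ 1/8) :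
    (3/32) * v x ≤ (2 * Real.pi)⁻¹ *
      ∫ ζ in {ζ : ℂ | 1/4 ≤ ‖ζ - x‖ ∧ ‖ζ - x‖ ≤ 1/2}, |v ζ| := by
  have hU : closedBall x (1/2) ⊆ ball 0 1 :=
    closedBall_subset_ball' (by rw [dist_zero_right]; linarith)
  have hannulus := hv.mul_le_setIntegral_norm_annulus (a := 1/4) (by norm_num) (by norm_num) hU
  calc (3/32) * v x = (2 * π)⁻¹ * (2 * π * v x * (((1/2) ^ 2 - (1/4) ^ 2) / 2)) := by
        field_simp; ring
    _ ≤ (2 * π)⁻¹ * ∫ ζ in annulus x (1/4) (1/2), ‖v ζ‖ := by gcongr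
end

section
/- Let Y be a one-dimensional complex manifold with a Hermitian form ω, and for each p ≥ 1 let Q_p : Y → [0, +∞] be a measurable function with ∫_Y Q_p ω ≤ c·p for a constant c > 0. Assume every x ∈ Y has a neighborhood U_x with ∫_{U_x} ω < +∞ on which Q_p ≥ ε_x > 0 holds ω-a.e. for all sufficiently large p. Then (1/p) log Q_p → 0 in L¹_loc(Y, ω) as p → +∞. -/
/-!
Splitting the logarithm at the threshold `p`, `|log t| ≤ |log ε| + log p + t / p` for every
`t ≥ ε`. On a neighbourhood `U` of finite measure where `Q p ≥ ε`, integrating this and using the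
mass bound `∫ Q p ≤ c p` gives `∫_U |log Q p| ≤ μ(U) (|log ε| + log p) + |c|`, which is `o(p)`.
-/

open MeasureTheory Filter Topology

lemma Real.abs_log_le_abs_log_add_log_add_div {ε t P : ℝ} (hε : 0 < ε) (hεt : ε ≤ t)
    (hP : 1 ≤ P) : |Real.log t| ≤ |Real.log ε| + Real.log P + t / P := by
  have ht : 0 < t := hε.trans_le hεt
  have hP₀ : 0 < P := one_pos.trans_le hP
  have hlogP : 0 ≤ Real.log P := Real.log_nonneg hP
  have htP : 0 ≤ t / P := by positivity
  rw [abs_le']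
  constructor
  · have hsplit : Real.log t = Real.log P + Real.log (t / P) := by
      rw [Real.log_div ht.ne' hP₀.ne']; ring
    linarith [Real.log_le_self htP, abs_nonneg (Real.log ε)]
  · linarith [Real.log_le_log hε hεt, neg_le_abs (Real.log ε)]

lemma integral_abs_log_toReal_le {α : Type*} [MeasurableSpace α] {ν : Measure α}
    [IsFiniteMeasure ν] {f : α → ENNReal} (hf : AEMeasurable f ν) (hfin : ∫⁻ y, f y ∂ν ≠ ⊤)
    {ε : ℝ} (hε : 0 < ε) (hlow : ∀ᵐ y ∂ν, ENNReal.ofReal ε ≤ f y) {P : ℝ} (hP : 1 ≤ P) :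
    ∫ y, |Real.log (f y).toReal| ∂ν
      ≤ ν.real Set.univ * (|Real.log ε| + Real.log P) + (∫⁻ y, f y ∂ν).toReal / P := by
  have hf_lt_top : ∀ᵐ y ∂ν, f y < ⊤ := ae_lt_top' hf hfin
  have hf_int : Integrable (fun y => (f y).toReal) ν := integrable_toReal_of_lintegral_ne_top hf hfin
  have hpointwise : ∀ᵐ y ∂ν,
      |Real.log (f y).toReal| ≤ |Real.log ε| + Real.log P + (f y).toReal / P := by
    filter_upwards [hlow, hf_lt_top] with y hy hy_top
    refine Real.abs_log_le_abs_log_add_log_add_div hε ?_ hP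
    simpa [ENNReal.toReal_ofReal hε.le] using ENNReal.toReal_mono hy_top.ne hy
  calc ∫ y, |Real.log (f y).toReal| ∂ν
      ≤ ∫ y, (|Real.log ε| + Real.log P + (f y).toReal / P) ∂ν :=
        integral_mono_of_nonneg (.of_forall fun _ => abs_nonneg _)
          ((integrable_const _).add (hf_int.div_const P)) hpointwise
    _ = ν.real Set.univ * (|Real.log ε| + Real.log P) + (∫⁻ y, f y ∂ν).toReal / P := by
        rw [integral_add (integrable_const _) (hf_int.div_const P), integral_div,
          integral_const, smul_eq_mul, integral_toReal hf hf_lt_top]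

lemma Real.tendsto_add_mul_log_div_atTop (A B : ℝ) :
    Tendsto (fun x => (A + B * Real.log x) / x) atTop (𝓝 0) := by
  have hlog : Tendsto (fun x => Real.log x / x) atTop (𝓝 0) := by
    simpa using Real.tendsto_pow_log_div_mul_add_atTop 1 0 1 one_ne_zero
  have hsum := (tendsto_inv_atTop_zero.const_mul A).add (hlog.const_mul B)
  simp only [mul_zero, add_zero] at hsum
  refine hsum.congr fun x => ?_
  ring

theorem log_bergman_to_zero_general {Y : Type*} [TopologicalSpace Y] [MeasurableSpace Y]
    (μ : Measure Y) (Q : ℕ → Y → ENNReal) (c : ℝ)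
    (hmeas : ∀ p, Measurable (Q p))
    (hint : ∀ p : ℕ, 1 ≤ p → ∫⁻ y, Q p y ∂μ ≤ ENNReal.ofReal (c * p))
    (hloc : ∀ x : Y, ∃ U ∈ 𝓝 x, μ U < ⊤ ∧ ∃ ε : ℝ, 0 < ε ∧
      ∀ᶠ p in atTop, ∀ᵐ y ∂(μ.restrict U), ENNReal.ofReal ε ≤ Q p y) :
    ∀ x : Y, ∃ U ∈ 𝓝 x,
      Tendsto (fun p : ℕ => ∫ y in U, |Real.log ((Q p y).toReal)| / p ∂μ)
        atTop (𝓝 0) := by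
  intro x
  obtain ⟨U, hU, hμU, ε, hε, hlow⟩ := hloc x
  refine ⟨U, hU, ?_⟩
  have : IsFiniteMeasure (μ.restrict U) := isFiniteMeasure_restrict.2 hμU.ne
  have hbound := (Real.tendsto_add_mul_log_div_atTop (μ.real U * |Real.log ε| + |c|)
    (μ.real U)).comp tendsto_natCast_atTop_atTop
  refine squeeze_zero' (.of_forall fun p => integral_nonneg fun y => by positivity) ?_ hbound
  filter_upwards [hlow, eventually_ge_atTop 1] with p hp hp1
  have hp₁ : (1 : ℝ) ≤ p := by exact_mod_cast hp1
  have hmass_le : ∫⁻ y in U, Q p y ∂μ ≤ ENNReal.ofReal (c * p) :=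
    (setLIntegral_le_lintegral U _).trans (hint p hp1)
  have hmass : (∫⁻ y in U, Q p y ∂μ).toReal ≤ |c| * p :=
    ENNReal.toReal_le_of_le_ofReal (by positivity)
      (hmass_le.trans (ENNReal.ofReal_le_ofReal (by gcongr; exact le_abs_self c)))
  have hlog := integral_abs_log_toReal_le (hmeas p).aemeasurable
    (ne_top_of_le_ne_top ENNReal.ofReal_ne_top hmass_le) hε hp hp₁
  rw [measureReal_restrict_apply_univ] at hlog
  rw [integral_div, Function.comp_apply]
  gcongr
  calc ∫ y in U, |Real.log (Q p y).toReal| ∂μ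
      ≤ μ.real U * (|Real.log ε| + Real.log p) + (∫⁻ y in U, Q p y ∂μ).toReal / p := hlog
    _ ≤ μ.real U * (|Real.log ε| + Real.log p) + |c| := by
        gcongr
        rwa [div_le_iff₀ (by positivity)]
    _ = _ := by ring

/-- Bergman kernel logarithm convergence: if Q_p ≥ 0 are measurable with ∫ Q_p ≤ c·p and every
point has a neighborhood of finite measure on which Q_p is a.e. bounded below by a positive
constant for large p, then (1/p) log Q_p → 0 in L¹_loc. -/
theorem log_bergman_to_zero {Y : Type*} [TopologicalSpace Y] [MeasurableSpace Y]
    (μ : Measure Y) (Q : ℕ → Y → ENNReal) (c : ℝ) (hc : 0 < c)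
    (hmeas : ∀ p, Measurable (Q p))
    (hint : ∀ p : ℕ, 1 ≤ p → ∫⁻ y, Q p y ∂μ ≤ ENNReal.ofReal (c * p))
    (hloc : ∀ x : Y, ∃ U ∈ 𝓝 x, μ U < ⊤ ∧ ∃ ε : ℝ, 0 < ε ∧
      ∀ᶠ p in atTop, ∀ᵐ y ∂(μ.restrict U), ENNReal.ofReal ε ≤ Q p y) :
    ∀ x : Y, ∃ U ∈ 𝓝 x,
      Tendsto (fun p : ℕ => ∫ y in U, |Real.log ((Q p y).toReal)| / p ∂μ)
        atTop (𝓝 0) :=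
  log_bergman_to_zero_general μ Q c hmeas hint hloc
end

section
/- Let d ≥ 1, p ≥ 1 be integers and let s be an entire function on ℂ such that ∫_{ℂ∖𝔻} |s(ζ)|² |ζ|^{-2d(p+1)} dλ(ζ) < +∞. Then s is a polynomial of degree at most dp + d - 2. -/
open MeasureTheory Metric Complex Filter Topology

/-!
Let `aₙ = s⁽ⁿ⁾(0) / n!`. Cauchy's estimate followed by Cauchy–Schwarz shows that the mean of
`|s|²` over the circle of radius `r` is at least `|aₙ|² r²ⁿ`. In polar coordinates the weighted
integral over `|ζ| > 1` therefore dominates `2π |aₙ|² ∫₁^∞ r^(2n + 1 - 2m) dr` with `m = d(p + 1)`,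
which diverges once `n ≥ m - 1`. So every Taylor coefficient of index `≥ dp + d - 1` vanishes, and
`s` is its Taylor polynomial.
-/

open Real Set Polynomial
open scoped Nat NNReal ENNReal Interval

theorem Real.sq_circleAverage_le_circleAverage_sq {f : ℂ → ℝ} {c : ℂ} {R : ℝ}
    (hf : CircleIntegrable f c R) (hf2 : CircleIntegrable (fun z => f z ^ 2) c R) :
    circleAverage f c R ^ 2 ≤ circleAverage (fun z => f z ^ 2) c R := by
  simp only [circleAverage_eq_intervalAverage]
  have hvol : volume (Ι 0 (2 * π)) = ENNReal.ofReal (2 * π) := by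
    simp [uIoc_of_le two_pi_pos.le]
  exact (even_two.convexOn_pow (𝕜 := ℝ)).map_set_average_le (continuous_pow 2).continuousOn
    isClosed_univ (by simp [hvol, pi_pos]) (by simp [hvol, ENNReal.mul_eq_top])
    (Eventually.of_forall fun _ => mem_univ _) (intervalIntegrable_iff.mp hf)
    (intervalIntegrable_iff.mp hf2)

theorem norm_iteratedDeriv_div_factorial_mul_pow_le_circleAverage {E : Type*}
    [NormedAddCommGroup E] [NormedSpace ℂ E] [CompleteSpace E] {f : ℂ → E} {c : ℂ} {R : ℝ}
    (hR : 0 < R) (hf : DifferentiableOn ℂ f (closedBall c R)) (n : ℕ) :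
    ‖iteratedDeriv n f c‖ / n ! * R ^ n ≤ circleAverage (fun z => ‖f z‖) c R := by
  lift R to ℝ≥0 using hR.le
  have hps := hf.hasFPowerSeriesOnBall (by exact_mod_cast hR)
  rw [iteratedDeriv_eq_iteratedFDeriv, ← hps.factorial_smul, RCLike.norm_nsmul ℂ, nsmul_eq_mul,
    mul_div_cancel_left₀ _ (by positivity)]
  calc _ ≤ ‖cauchyPowerSeries f c R n‖ * R ^ n := by
        gcongr
        exact ((cauchyPowerSeries f c R n).le_opNorm _).trans_eq (by simp)
    _ ≤ circleAverage (fun z => ‖f z‖) c R * (R : ℝ)⁻¹ ^ n * R ^ n := by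
        gcongr
        simpa [circleAverage_def] using norm_cauchyPowerSeries_le f c R n
    _ = _ := by rw [mul_assoc, ← mul_pow, inv_mul_cancel₀ hR.ne', one_pow, mul_one]

theorem sq_norm_iteratedDeriv_div_factorial_mul_pow_le_circleAverage {E : Type*}
    [NormedAddCommGroup E] [NormedSpace ℂ E] [CompleteSpace E] {f : ℂ → E} {c : ℂ} {R : ℝ}
    (hR : 0 < R) (hf : DifferentiableOn ℂ f (closedBall c R)) (n : ℕ) :
    (‖iteratedDeriv n f c‖ / n !) ^ 2 * R ^ (2 * n) ≤
      circleAverage (fun z => ‖f z‖ ^ 2) c R := by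
  have hcont : ContinuousOn (fun z => ‖f z‖) (sphere c R) :=
    (hf.continuousOn.mono sphere_subset_closedBall).norm
  calc _ = (‖iteratedDeriv n f c‖ / n ! * R ^ n) ^ 2 := by ring
    _ ≤ circleAverage (fun z => ‖f z‖) c R ^ 2 := by
        gcongr
        exact norm_iteratedDeriv_div_factorial_mul_pow_le_circleAverage hR hf n
    _ ≤ _ := sq_circleAverage_le_circleAverage_sq (hcont.circleIntegrable hR.le)
        ((hcont.pow 2).circleIntegrable hR.le)

theorem Complex.polarCoord_symm_eq_circleMap (p : ℝ × ℝ) :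
    Complex.polarCoord.symm p = circleMap 0 p.1 p.2 := by
  simp [circleMap_zero, exp_mul_I]

theorem lintegral_eq_lintegral_Ioi_lintegral_circleMap {g : ℂ → ℝ≥0∞} (hg : Measurable g) :
    ∫⁻ z, g z = ∫⁻ r in Ioi 0, ENNReal.ofReal r * ∫⁻ θ in Ioo (-π) π, g (circleMap 0 r θ) := by
  simp_rw [← Complex.lintegral_comp_polarCoord_symm, polarCoord_target, Measure.volume_eq_prod,
    ← Measure.prod_restrict, Complex.polarCoord_symm_eq_circleMap, smul_eq_mul]
  rw [lintegral_prod]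
  · refine lintegral_congr fun r => ?_
    exact lintegral_const_mul (ENNReal.ofReal r) (hg.comp (continuous_circleMap 0 r).measurable)
  · have : Continuous fun p : ℝ × ℝ => circleMap 0 p.1 p.2 := by unfold circleMap; fun_prop
    exact (measurable_fst.ennreal_ofReal.mul (hg.comp this.measurable)).aemeasurable

theorem setLIntegral_Ioo_ofReal_circleMap {h : ℂ → ℝ} {c : ℂ} {R : ℝ}
    (hh : CircleIntegrable h c R) (h0 : ∀ z, 0 ≤ h z) :
    ∫⁻ θ in Ioo (-π) π, ENNReal.ofReal (h (circleMap c R θ)) =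
      ENNReal.ofReal (2 * π * circleAverage h c R) := by
  have hint : IntervalIntegrable (fun θ => h (circleMap c R θ)) volume (-π) π :=
    (periodic_circleMap c R).comp h |>.intervalIntegrable₀ two_pi_pos.ne' hh (-π) π
  rw [setLIntegral_congr Ioo_ae_eq_Ioc, ← ofReal_integral_eq_lintegral_ofReal hint.1
    (Eventually.of_forall fun _ => h0 _), ← intervalIntegral.integral_of_le (by linarith [pi_pos]),
    circleAverage_eq_integral_add (-π),
    intervalIntegral.integral_comp_add_right (fun θ => h (circleMap c R θ))]
  congr 1
  rw [smul_eq_mul, ← mul_assoc, mul_inv_cancel₀ two_pi_pos.ne', one_mul]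
  congr 1 <;> ring

theorem setLIntegral_Ioi_ofReal_inv_eq_top {a : ℝ} (ha : 0 ≤ a) :
    ∫⁻ r in Ioi a, ENNReal.ofReal r⁻¹ = ∞ := by
  by_contra h
  refine not_integrableOn_Ioi_inv (a := a) ⟨measurable_inv.aestronglyMeasurable,
    (hasFiniteIntegral_iff_ofReal ?_).2 (lt_top_iff_ne_top.2 h)⟩
  filter_upwards [ae_restrict_mem measurableSet_Ioi] with r hr using inv_nonneg.2 (ha.trans hr.le)

theorem sq_norm_iteratedDeriv_div_factorial_div_le_mul_circleAverage {s : ℂ → ℂ}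
    (hs : Differentiable ℂ s) {m n : ℕ} (hmn : m ≤ n + 1) {r : ℝ} (hr : 1 ≤ r) :
    (‖iteratedDeriv n s 0‖ / n !) ^ 2 / r ≤
      r * circleAverage (fun ζ => ‖s ζ‖ ^ 2 * ‖ζ‖ ^ (-(2 * (m : ℤ)))) 0 r := by
  have hr0 : 0 < r := one_pos.trans_le hr
  have hweight : EqOn (fun ζ => ‖s ζ‖ ^ 2 * ‖ζ‖ ^ (-(2 * (m : ℤ))))
      (fun ζ => r ^ (-(2 * (m : ℤ))) • ‖s ζ‖ ^ 2) (sphere 0 |r|) := fun ζ hζ => by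
    rw [mem_sphere_zero_iff_norm, abs_of_pos hr0] at hζ
    simp [hζ, mul_comm]
  have hpow : r⁻¹ ≤ r * r ^ (-(2 * (m : ℤ))) * r ^ (2 * n) := by
    rw [← zpow_neg_one, ← zpow_natCast, ← zpow_one_add₀ hr0.ne', ← zpow_add₀ hr0.ne']
    exact zpow_le_zpow_right₀ hr (by omega)
  rw [circleAverage_congr_sphere hweight, circleAverage_fun_smul, smul_eq_mul, div_eq_mul_inv]
  calc _ ≤ (‖iteratedDeriv n s 0‖ / n !) ^ 2 * (r * r ^ (-(2 * (m : ℤ))) * r ^ (2 * n)) := by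
        gcongr
    _ = r * r ^ (-(2 * (m : ℤ))) * ((‖iteratedDeriv n s 0‖ / n !) ^ 2 * r ^ (2 * n)) := by ring
    _ ≤ r * r ^ (-(2 * (m : ℤ))) * circleAverage (fun z => ‖s z‖ ^ 2) 0 r := by
        gcongr
        exact sq_norm_iteratedDeriv_div_factorial_mul_pow_le_circleAverage hr0
          hs.differentiableOn n
    _ = _ := by ring

theorem setLIntegral_Ioi_one_ofReal_circleAverage_le {F : ℂ → ℝ} (hFm : Measurable F)
    (hF0 : ∀ ζ, 0 ≤ F ζ) (hFc : ∀ r, 1 < r → CircleIntegrable F 0 r) :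
    ∫⁻ r in Ioi 1, ENNReal.ofReal (r * (2 * π * circleAverage F 0 r)) ≤
      ∫⁻ ζ in (ball 0 1)ᶜ, ENNReal.ofReal (F ζ) := by
  set G := (ball (0 : ℂ) 1)ᶜ.indicator fun ζ => ENNReal.ofReal (F ζ)
  have hcircle : ∀ r ∈ Ioi (1 : ℝ), ENNReal.ofReal (r * (2 * π * circleAverage F 0 r)) =
      ENNReal.ofReal r * ∫⁻ θ in Ioo (-π) π, G (circleMap 0 r θ) := fun r hr => by
    have hr0 : 0 < r := one_pos.trans hr
    have hout : ∀ θ, circleMap 0 r θ ∈ (ball (0 : ℂ) 1)ᶜ := fun θ => by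
      simp [abs_of_pos hr0, (mem_Ioi.1 hr).le]
    simp_rw [G, indicator_of_mem (hout _)]
    rw [setLIntegral_Ioo_ofReal_circleMap (hFc r hr) hF0, ENNReal.ofReal_mul hr0.le]
  calc _ = ∫⁻ r in Ioi 1, ENNReal.ofReal r * ∫⁻ θ in Ioo (-π) π, G (circleMap 0 r θ) :=
        setLIntegral_congr_fun measurableSet_Ioi hcircle
    _ ≤ ∫⁻ r in Ioi 0, ENNReal.ofReal r * ∫⁻ θ in Ioo (-π) π, G (circleMap 0 r θ) :=
        lintegral_mono_set (Ioi_subset_Ioi zero_le_one)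
    _ = ∫⁻ ζ, G ζ := (lintegral_eq_lintegral_Ioi_lintegral_circleMap
        (hFm.ennreal_ofReal.indicator measurableSet_ball.compl)).symm
    _ = _ := lintegral_indicator measurableSet_ball.compl _

theorem iteratedDeriv_eq_zero_of_integrableOn_compl_ball {s : ℂ → ℂ} (hs : Differentiable ℂ s)
    {m n : ℕ} (hmn : m ≤ n + 1)
    (hint : IntegrableOn (fun ζ : ℂ => ‖s ζ‖ ^ 2 * ‖ζ‖ ^ (-(2 * (m : ℤ)))) (ball 0 1)ᶜ volume) :
    iteratedDeriv n s 0 = 0 := by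
  set F := fun ζ : ℂ => ‖s ζ‖ ^ 2 * ‖ζ‖ ^ (-(2 * (m : ℤ)))
  set a := (‖iteratedDeriv n s 0‖ / n !) ^ 2
  by_contra hne
  have ha : 0 < a := by positivity
  have hF0 : ∀ ζ, 0 ≤ F ζ := fun ζ => by positivity
  have hFm : Measurable F :=
    (hs.continuous.norm.pow 2).measurable.mul (measurable_norm.pow_const _)
  have hFc : ∀ r, 1 < r → CircleIntegrable F 0 r := fun r hr =>
    ContinuousOn.circleIntegrable (zero_le_one.trans hr.le) <|
      (hs.continuous.norm.pow 2).continuousOn.mul <|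
        continuous_norm.continuousOn.zpow₀ _ fun ζ hζ => Or.inl <| by
          rw [mem_sphere_zero_iff_norm] at hζ; linarith
  have hdiverge : ∫⁻ r in Ioi 1, ENNReal.ofReal (r * (2 * π * circleAverage F 0 r)) = ∞ := by
    refine top_unique ?_
    calc ∞ = ∫⁻ r in Ioi 1, ENNReal.ofReal (2 * π * a) * ENNReal.ofReal r⁻¹ := by
          rw [lintegral_const_mul _ measurable_inv.ennreal_ofReal,
            setLIntegral_Ioi_ofReal_inv_eq_top zero_le_one,
            ENNReal.mul_top (ENNReal.ofReal_pos.2 (mul_pos two_pi_pos ha)).ne']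
      _ ≤ _ := setLIntegral_mono' measurableSet_Ioi fun r hr => by
          have := sq_norm_iteratedDeriv_div_factorial_div_le_mul_circleAverage hs hmn
            (mem_Ioi.1 hr).le
          rw [← ENNReal.ofReal_mul (by positivity)]
          refine ENNReal.ofReal_le_ofReal ?_
          rw [div_eq_mul_inv] at this
          linarith [mul_le_mul_of_nonneg_left this two_pi_pos.le]
  refine ((hasFiniteIntegral_iff_ofReal (Eventually.of_forall hF0)).1 hint.2).ne (top_unique ?_)
  exact hdiverge ▸ setLIntegral_Ioi_one_ofReal_circleAverage_le hFm hF0 hFc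

theorem Differentiable.exists_polynomial_of_iteratedDeriv_eq_zero {f : ℂ → ℂ}
    (hf : Differentiable ℂ f) {N : ℕ} (hN : ∀ n, N < n → iteratedDeriv n f 0 = 0) :
    ∃ q : ℂ[X], q.natDegree ≤ N ∧ ∀ z, f z = q.eval z := by
  refine ⟨∑ k ∈ Finset.range (N + 1), C ((k ! : ℂ)⁻¹ * iteratedDeriv k f 0) * X ^ k, ?_,
    fun z => ?_⟩
  · refine natDegree_sum_le_of_forall_le _ _ fun k hk => (natDegree_C_mul_X_pow_le _ _).trans ?_
    exact Nat.lt_succ_iff.1 (Finset.mem_range.1 hk)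
  · rw [← taylorSeries_eq_of_entire' 0 z hf, tsum_eq_sum (s := Finset.range (N + 1))]
    · simp [eval_finsetSum]
    · intro n hn
      simp [hN n (by simpa using hn)]

theorem entire_L2_growth_general (d p : ℕ) (s : ℂ → ℂ)
    (hs : Differentiable ℂ s)
    (hint : IntegrableOn
      (fun ζ : ℂ => ‖s ζ‖ ^ 2 * ‖ζ‖ ^ (-(2 * (d : ℤ) * ((p : ℤ) + 1))))
      (ball 0 1)ᶜ volume) :
    ∃ q : Polynomial ℂ, q.natDegree ≤ d * p + d - 2 ∧ ∀ ζ, s ζ = q.eval ζ := by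
  have hexp : -(2 * (d : ℤ) * ((p : ℤ) + 1)) = -(2 * ((d * p + d : ℕ) : ℤ)) := by push_cast; ring
  rw [hexp] at hint
  exact hs.exists_polynomial_of_iteratedDeriv_eq_zero fun n hn =>
    iteratedDeriv_eq_zero_of_integrableOn_compl_ball hs (by omega) hint

/-- An entire function with ∫_{ℂ∖𝔻} |s|²|ζ|^{-2d(p+1)} dλ < ∞ is a polynomial of
degree at most dp + d - 2. -/
theorem entire_L2_growth (d p : ℕ) (hd : 1 ≤ d) (hp : 1 ≤ p) (s : ℂ → ℂ)
    (hs : Differentiable ℂ s)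
    (hint : IntegrableOn
      (fun ζ : ℂ => ‖s ζ‖ ^ 2 * ‖ζ‖ ^ (-(2 * (d : ℤ) * ((p : ℤ) + 1))))
      (ball 0 1)ᶜ volume) :
    ∃ q : Polynomial ℂ, q.natDegree ≤ d * p + d - 2 ∧ ∀ ζ, s ζ = q.eval ζ :=
  entire_L2_growth_general d p s hs hint
end

section
/- Let P ∈ ℂ[ζ] be a polynomial of degree d ≥ 2. Then the pullback of the Fubini–Study form under the map ζ ↦ [1 : ζ : P(ζ)], namely σ*(ω) = (1/(2)) dd^c log(1 + |ζ|² + |P(ζ)|²), satisfies c₁/(1+|ζ|^{2d}) · (i/2) dζ∧dζ̄ ≤ σ*(ω) ≤ c₂/(1+|ζ|^{2d}) · (i/2) dζ∧dζ̄ on ℂ for some constants c₁, c₂ > 0. Equivalently, the density (1 + |P'(ζ)|² + |ζP'(ζ) − P(ζ)|²)/(π(1 + |ζ|² + |P(ζ)|²)²) is comparable to 1/(1+|ζ|^{2d}) on ℂ. -/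
/-! The weighted density `ρ(ζ) (1 + |ζ|^{2d})` is continuous and positive on `ℂ`, so it is enough
that it has a positive limit at infinity. After dividing numerator and denominator of `ρ` by
`1 + |ζ|^{2d}`, each term `|Q(ζ)|² / (1 + |ζ|^{2d})` with `deg Q ≤ d` tends to `|coeff_d Q|²`.
Upstairs only `ζP' - P` survives, with leading coefficient `(d - 1) a ≠ 0` since `d ≥ 2`;
downstairs only `P` does, so the limit is `(d - 1)² / (π |a|²)`. -/

open Filter Topology Bornology Metric Complex Polynomial

namespace Polynomial

variable {𝕜 : Type*} [NormedField 𝕜]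

theorem eval_div_pow_eq_eval_reflect {Q : 𝕜[X]} {n : ℕ} (hQ : Q.natDegree ≤ n) {z : 𝕜}
    (hz : z ≠ 0) : Q.eval z / z ^ n = (reflect n Q).eval z⁻¹ := by
  let := invertibleOfNonzero hz
  rw [div_eq_iff (pow_ne_zero _ hz), ← invOf_eq_inv]
  exact (eval₂_reflect_mul_pow (RingHom.id 𝕜) z n Q hQ).symm

theorem tendsto_eval_div_pow_cobounded {Q : 𝕜[X]} {n : ℕ} (hQ : Q.natDegree ≤ n) :
    Tendsto (fun z => Q.eval z / z ^ n) (cobounded 𝕜) (𝓝 (Q.coeff n)) := by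
  have hlim : Tendsto (fun z : 𝕜 => (reflect n Q).eval z⁻¹) (cobounded 𝕜)
      (𝓝 ((reflect n Q).eval 0)) :=
    (reflect n Q).continuous.continuousAt.tendsto.comp tendsto_inv₀_cobounded
  rw [← coeff_zero_eq_eval_zero, coeff_reflect, revAt_zero] at hlim
  refine hlim.congr' ?_
  filter_upwards [eventually_ne_cobounded 0] with z hz
  exact (eval_div_pow_eq_eval_reflect hQ hz).symm

theorem tendsto_norm_eval_sq_div_one_add_pow_cobounded {Q : 𝕜[X]} {n : ℕ} (hn : n ≠ 0)
    (hQ : Q.natDegree ≤ n) :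
    Tendsto (fun z => ‖Q.eval z‖ ^ 2 / (1 + ‖z‖ ^ (2 * n))) (cobounded 𝕜)
      (𝓝 (‖Q.coeff n‖ ^ 2)) := by
  have hinv : Tendsto (fun z : 𝕜 => (1 + ‖z‖ ^ (2 * n))⁻¹) (cobounded 𝕜) (𝓝 0) :=
    tendsto_inv_atTop_zero.comp <| tendsto_atTop_add_const_left _ 1 <|
      (tendsto_pow_atTop (by omega)).comp tendsto_norm_cobounded_atTop
  have hlim := ((tendsto_eval_div_pow_cobounded hQ).norm.pow 2).mul (hinv.const_sub 1)
  rw [sub_zero, mul_one] at hlim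
  refine hlim.congr' ?_
  filter_upwards [eventually_ne_cobounded 0] with z hz
  have hw : 1 + ‖z‖ ^ (2 * n) ≠ 0 := by positivity
  rw [norm_div, norm_pow, div_pow, ← pow_mul, mul_comm n 2]
  field_simp
  ring

theorem coeff_X_mul_derivative_sub {R : Type*} [CommRing R] (P : R[X]) (n : ℕ) :
    (X * derivative P - P).coeff n = (n - 1) * P.coeff n := by
  cases n with
  | zero => simp
  | succ n =>
    simp only [coeff_sub, coeff_X_mul, coeff_derivative, Nat.cast_add, Nat.cast_one,
      add_sub_cancel_right]
    ring

theorem natDegree_X_mul_derivative_sub_le {R : Type*} [CommRing R] (P : R[X]) :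
    (X * derivative P - P).natDegree ≤ P.natDegree :=
  natDegree_le_iff_coeff_eq_zero.2 fun n hn => by
    rw [coeff_X_mul_derivative_sub, coeff_eq_zero_of_natDegree_lt (by exact_mod_cast hn),
      mul_zero]

end Polynomial

theorem exists_pos_bounds_of_tendsto_cocompact {α : Type*} [TopologicalSpace α] [Nonempty α]
    {f : α → ℝ} (hf : Continuous f) (hpos : ∀ x, 0 < f x) {L : ℝ} (hL : 0 < L)
    (hlim : Tendsto f (cocompact α) (𝓝 L)) :
    ∃ c₁ c₂ : ℝ, 0 < c₁ ∧ 0 < c₂ ∧ ∀ x, c₁ ≤ f x ∧ f x ≤ c₂ := by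
  obtain ⟨x₀⟩ := ‹Nonempty α›
  -- Truncating `f` at `L / 2` and `2 * L` makes it constant near infinity, so the truncations
  -- attain their extrema.
  obtain ⟨xmin, hxmin⟩ := (hf.min continuous_const).exists_forall_le' x₀
    ((hlim.eventually_const_le (half_lt_self hL)).mono fun x hx =>
      (min_le_right _ _).trans_eq (min_eq_right hx).symm)
  obtain ⟨xmax, hxmax⟩ := (hf.max continuous_const).exists_forall_ge' x₀
    ((hlim.eventually_le_const (by linarith : L < 2 * L)).mono fun x hx =>
      (max_eq_right hx).trans_le (le_max_right _ _))
  refine ⟨min (f xmin) (L / 2), max (f xmax) (2 * L), lt_min (hpos _) (half_pos hL),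
    lt_max_of_lt_right (by positivity), fun x => ⟨?_, ?_⟩⟩
  · exact (hxmin x).trans (min_le_left _ _)
  · exact (le_max_left _ _).trans (hxmax x)

noncomputable def fubiniStudyDensity (P : ℂ[X]) (ζ : ℂ) : ℝ :=
  (1 + ‖P.derivative.eval ζ‖ ^ 2 + ‖ζ * P.derivative.eval ζ - P.eval ζ‖ ^ 2) /
    (Real.pi * (1 + ‖ζ‖ ^ 2 + ‖P.eval ζ‖ ^ 2) ^ 2)

theorem continuous_fubiniStudyDensity (P : ℂ[X]) : Continuous (fubiniStudyDensity P) :=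
  Continuous.div (by fun_prop) (by fun_prop) fun ζ => by positivity

theorem fubiniStudyDensity_pos (P : ℂ[X]) (ζ : ℂ) : 0 < fubiniStudyDensity P ζ := by
  unfold fubiniStudyDensity
  positivity

theorem tendsto_fubiniStudyDensity_mul_one_add_pow {P : ℂ[X]} (hd : 2 ≤ P.natDegree) :
    Tendsto (fun ζ => fubiniStudyDensity P ζ * (1 + ‖ζ‖ ^ (2 * P.natDegree))) (cobounded ℂ)
      (𝓝 (((P.natDegree : ℝ) - 1) ^ 2 / (Real.pi * ‖P.leadingCoeff‖ ^ 2))) := by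
  set d := P.natDegree
  have hd0 : d ≠ 0 := by omega
  have hlim (Q : ℂ[X]) (hQ : Q.natDegree ≤ d) :=
    tendsto_norm_eval_sq_div_one_add_pow_cobounded hd0 hQ
  have hone := hlim 1 (by simp)
  have hX := hlim X (natDegree_X_le.trans (by omega))
  have hP := hlim P le_rfl
  have hP' := hlim (derivative P) ((natDegree_derivative_le P).trans (Nat.sub_le d 1))
  have hQ := hlim _ (natDegree_X_mul_derivative_sub_le P)
  have ha : 0 < ‖P.coeff d‖ :=
    norm_pos_iff.2 (leadingCoeff_ne_zero.2 (ne_zero_of_natDegree_gt hd))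
  rw [coeff_one, if_neg hd0, norm_zero] at hone
  rw [coeff_X, if_neg (by omega), norm_zero] at hX
  rw [coeff_eq_zero_of_natDegree_lt ((natDegree_derivative_le P).trans_lt (by omega)),
    norm_zero] at hP'
  rw [coeff_X_mul_derivative_sub] at hQ
  have hratio := ((hone.add hP').add hQ).div
    (Tendsto.const_mul Real.pi (((hone.add hX).add hP).pow 2)) (by positivity)
  have hL : ((0 : ℝ) ^ 2 + 0 ^ 2 + ‖((d : ℂ) - 1) * P.coeff d‖ ^ 2) /
      (Real.pi * (0 ^ 2 + 0 ^ 2 + ‖P.coeff d‖ ^ 2) ^ 2) =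
      ((d : ℝ) - 1) ^ 2 / (Real.pi * ‖P.leadingCoeff‖ ^ 2) := by
    have hnorm : ‖(d : ℂ) - 1‖ ^ 2 = ((d : ℝ) - 1) ^ 2 := by
      rw [← ofReal_natCast, ← ofReal_one, ← ofReal_sub, norm_real, Real.norm_eq_abs, sq_abs]
    rw [norm_mul, mul_pow, hnorm]
    change _ = _ / (Real.pi * ‖P.coeff d‖ ^ 2)
    field_simp
    ring
  rw [hL] at hratio
  refine hratio.congr fun ζ => ?_
  have hw : 1 + ‖ζ‖ ^ (2 * d) ≠ 0 := by positivity
  simp only [Pi.div_apply, eval_one, norm_one, eval_X, eval_sub, eval_mul, fubiniStudyDensity]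
  field_simp

/-- The Fubini–Study pullback density (1+|P'|²+|ζP'−P|²)/(π(1+|ζ|²+|P|²)²) under
ζ ↦ [1:ζ:P(ζ)] is comparable to 1/(1+|ζ|^{2d}) when deg P = d ≥ 2. -/
theorem fs_pullback_comparable (d : ℕ) (hd : 2 ≤ d) (P : Polynomial ℂ)
    (hP : P.natDegree = d) :
    ∃ c₁ c₂ : ℝ, 0 < c₁ ∧ 0 < c₂ ∧ ∀ ζ : ℂ,
      c₁ / (1 + ‖ζ‖ ^ (2 * d)) ≤
        (1 + ‖P.derivative.eval ζ‖ ^ 2 +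
            ‖ζ * P.derivative.eval ζ - P.eval ζ‖ ^ 2) /
          (Real.pi * (1 + ‖ζ‖ ^ 2 + ‖P.eval ζ‖ ^ 2) ^ 2) ∧
      (1 + ‖P.derivative.eval ζ‖ ^ 2 +
            ‖ζ * P.derivative.eval ζ - P.eval ζ‖ ^ 2) /
          (Real.pi * (1 + ‖ζ‖ ^ 2 + ‖P.eval ζ‖ ^ 2) ^ 2)
        ≤ c₂ / (1 + ‖ζ‖ ^ (2 * d)) := by
  subst hP
  have hlim := tendsto_fubiniStudyDensity_mul_one_add_pow hd
  rw [cobounded_eq_cocompact] at hlim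
  have hL : 0 < ((P.natDegree : ℝ) - 1) ^ 2 / (Real.pi * ‖P.leadingCoeff‖ ^ 2) := by
    have hd₁ : (1 : ℝ) < P.natDegree := by exact_mod_cast hd
    have ha : P.leadingCoeff ≠ 0 := leadingCoeff_ne_zero.2 (ne_zero_of_natDegree_gt hd)
    positivity
  obtain ⟨c₁, c₂, hc₁, hc₂, hc⟩ := exists_pos_bounds_of_tendsto_cocompact
    ((continuous_fubiniStudyDensity P).mul (by fun_prop))
    (fun ζ => mul_pos (fubiniStudyDensity_pos P ζ) (by positivity)) hL hlim
  refine ⟨c₁, c₂, hc₁, hc₂, fun ζ => ?_⟩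
  have hw : 0 < 1 + ‖ζ‖ ^ (2 * P.natDegree) := by positivity
  exact ⟨(div_le_iff₀ hw).2 (hc ζ).1, (le_div_iff₀ hw).2 (hc ζ).2⟩
end
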